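/- arXiv:math/9205208 — 7 statements merged into one kernel-verified Lean document; each statement's English description precedes it below -/
import Mathlib

section
/- (Transitivity) Let f, g, h : ℕ → ℕ with f(k), g(k), h(k) ≥ 1 for all k. Then 𝔠(f,h) ≤ 𝔠(f,g) · 𝔠(g,h). -/
/-- `B` is a `g`-slalom: a sequence of finite sets of naturals with `|B k| = g k`. -/
def IsSlalom (g : ℕ → ℕ) (B : ℕ → Finset ℕ) : Prop := ∀ k, (B k).card = g k

/-- `x` is covered by the slalom `B`. -/
def Covers (B : ℕ → Finset ℕ) (x : ℕ → ℕ) : Prop := ∀ k, x k ∈ B k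

/-- `slalomCov f g` is the least cardinality of a family of `g`-slaloms covering
every `x : ℕ → ℕ` with `x k < f k` for all `k`. -/
noncomputable def slalomCov (f g : ℕ → ℕ) : Cardinal :=
  sInf { c : Cardinal | ∃ 𝓑 : Set (ℕ → Finset ℕ),
    (∀ B ∈ 𝓑, IsSlalom g B) ∧
    (∀ x : ℕ → ℕ, (∀ k, x k < f k) → ∃ B ∈ 𝓑, Covers B x) ∧
    c = Cardinal.mk 𝓑 }

/-- Enumeration of a finset of naturals. -/
noncomputable def slalomEnum (s : Finset ℕ) (i : ℕ) : ℕ := (s.sort (· ≤ ·)).getD i 0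

lemma slalomEnum_index (s : Finset ℕ) {a : ℕ} (ha : a ∈ s) :
    (s.sort (· ≤ ·)).idxOf a < s.card ∧ slalomEnum s ((s.sort (· ≤ ·)).idxOf a) = a := by
  have hm : a ∈ s.sort (· ≤ ·) := (Finset.mem_sort _).2 ha
  have hlt : (s.sort (· ≤ ·)).idxOf a < (s.sort (· ≤ ·)).length :=
    List.idxOf_lt_length_iff.2 hm
  refine ⟨by simpa using hlt, ?_⟩
  rw [slalomEnum, List.getD_eq_getElem _ _ hlt, List.getElem_idxOf]

/-- Pad a finset of naturals to have exactly `n` elements (when `s.card ≤ n`). -/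
noncomputable def slalomPad (s : Finset ℕ) (n : ℕ) : Finset ℕ :=
  if hle : s.card ≤ n then Classical.choose (Infinite.exists_superset_card_eq s n hle) else s

lemma slalomPad_spec (s : Finset ℕ) {n : ℕ} (hle : s.card ≤ n) :
    s ⊆ slalomPad s n ∧ (slalomPad s n).card = n := by
  rw [slalomPad, dif_pos hle]
  exact Classical.choose_spec (Infinite.exists_superset_card_eq s n hle)

/-- Composition of two slaloms. -/
noncomputable def slalomComp (h : ℕ → ℕ) (B C : ℕ → Finset ℕ) : ℕ → Finset ℕ :=
  fun k => slalomPad ((C k).image (slalomEnum (B k))) (h k)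

lemma slalomCov_mem_nonempty (f g : ℕ → ℕ) (hg : ∀ k, 1 ≤ g k) :
    { c : Cardinal | ∃ 𝓑 : Set (ℕ → Finset ℕ),
      (∀ B ∈ 𝓑, IsSlalom g B) ∧
      (∀ x : ℕ → ℕ, (∀ k, x k < f k) → ∃ B ∈ 𝓑, Covers B x) ∧
      c = Cardinal.mk 𝓑 }.Nonempty := by
  refine ⟨_, {B | IsSlalom g B}, fun B hB => hB, fun x _ => ?_, rfl⟩
  refine ⟨fun k => (Finset.range (g k)).image (x k + ·), fun k => ?_, fun k => ?_⟩
  · rw [Finset.card_image_of_injective _ (add_right_injective _), Finset.card_range]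
  · exact Finset.mem_image.2 ⟨0, Finset.mem_range.2 (hg k), rfl⟩

theorem slalomCov_trans (f g h : ℕ → ℕ)
    (hf : ∀ k, 1 ≤ f k) (hg : ∀ k, 1 ≤ g k) (hh : ∀ k, 1 ≤ h k) :
    slalomCov f h ≤ slalomCov f g * slalomCov g h := by
  obtain ⟨𝓑, hB1, hB2, hB3⟩ := csInf_mem (slalomCov_mem_nonempty f g hg)
  obtain ⟨𝓒, hC1, hC2, hC3⟩ := csInf_mem (slalomCov_mem_nonempty g h hh)
  set 𝓓 : Set (ℕ → Finset ℕ) :=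
    Set.range (fun p : ↥𝓑 × ↥𝓒 => slalomComp h p.1.1 p.2.1) with h𝓓
  have hcard : ∀ (B C : ℕ → Finset ℕ), C ∈ 𝓒 → ∀ k,
      ((C k).image (slalomEnum (B k))).card ≤ h k := fun B C hC k =>
    le_of_le_of_eq (Finset.card_image_le) (hC1 C hC k)
  have hslalom : ∀ D ∈ 𝓓, IsSlalom h D := by
    rintro D ⟨⟨⟨B, hB⟩, ⟨C, hC⟩⟩, rfl⟩ k
    exact (slalomPad_spec _ (hcard B C hC k)).2
  have hcover : ∀ x : ℕ → ℕ, (∀ k, x k < f k) → ∃ D ∈ 𝓓, Covers D x := by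
    intro x hx
    obtain ⟨B, hB, hBx⟩ := hB2 x hx
    set y : ℕ → ℕ := fun k => ((B k).sort (· ≤ ·)).idxOf (x k) with hy
    have hy2 : ∀ k, y k < g k := fun k => by
      have := (slalomEnum_index (B k) (hBx k)).1
      rwa [hB1 B hB k] at this
    obtain ⟨C, hC, hCy⟩ := hC2 y hy2
    refine ⟨slalomComp h B C, ⟨⟨⟨B, hB⟩, ⟨C, hC⟩⟩, rfl⟩, fun k => ?_⟩
    apply (slalomPad_spec _ (hcard B C hC k)).1
    exact Finset.mem_image.2 ⟨y k, hCy k, (slalomEnum_index (B k) (hBx k)).2⟩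
  calc slalomCov f h ≤ Cardinal.mk 𝓓 := csInf_le' ⟨𝓓, hslalom, hcover, rfl⟩
    _ ≤ Cardinal.mk (↥𝓑 × ↥𝓒) := Cardinal.mk_range_le
    _ = slalomCov f g * slalomCov g h := by
      simp only [Cardinal.mk_prod, Cardinal.lift_id]
      rw [slalomCov, slalomCov, hB3, hC3]
end

section
/- Let f, g : ℕ → ℕ with 1 ≤ g(k) < f(k) for all k. Then 𝔠(f·⌊f/g⌋, f) ≤ 𝔠(f,g), where (f·⌊f/g⌋)(k) = f(k)·⌊f(k)/g(k)⌋ and ⌊·⌋ is the integer part. -/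
/-- Pad a finset of naturals up to an exact cardinality. -/
noncomputable def padTo (s : Finset ℕ) (n : ℕ) : Finset ℕ :=
  if h : s.card ≤ n then (Infinite.exists_superset_card_eq s n h).choose else s

lemma padTo_subset (s : Finset ℕ) (n : ℕ) (h : s.card ≤ n) : s ⊆ padTo s n := by
  rw [padTo, dif_pos h]
  exact (Infinite.exists_superset_card_eq s n h).choose_spec.1

lemma padTo_card (s : Finset ℕ) (n : ℕ) (h : s.card ≤ n) : (padTo s n).card = n := by
  rw [padTo, dif_pos h]
  exact (Infinite.exists_superset_card_eq s n h).choose_spec.2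

theorem slalomCov_mul_div_le (f g : ℕ → ℕ) (hg : ∀ k, 1 ≤ g k) (hgf : ∀ k, g k < f k) :
    slalomCov (fun k => f k * (f k / g k)) f ≤ slalomCov f g := by
  classical
  set m : ℕ → ℕ := fun k => f k / g k with hm
  have hm1 : ∀ k, 1 ≤ m k := fun k =>
    (Nat.one_le_div_iff (hg k)).2 (le_of_lt (hgf k))
  apply le_csInf
  · -- the defining set for `slalomCov f g` is nonempty
    refine ⟨Cardinal.mk {B : ℕ → Finset ℕ | IsSlalom g B},
      {B | IsSlalom g B}, fun B hB => hB, ?_, rfl⟩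
    intro x hx
    refine ⟨fun k => padTo {x k} (g k), fun k => ?_, fun k => ?_⟩
    · exact padTo_card _ _ (by simpa using hg k)
    · exact padTo_subset _ _ (by simpa using hg k) (Finset.mem_singleton_self _)
  · rintro c ⟨𝓑, hsl, hcov, rfl⟩
    -- transform each g-slalom B into an f-slalom Φ B
    set Φ : (ℕ → Finset ℕ) → (ℕ → Finset ℕ) := fun B k =>
      padTo ((B k ×ˢ Finset.range (m k)).image (fun p => m k * p.1 + p.2)) (f k) with hΦ
    have hcard : ∀ B ∈ 𝓑, ∀ k,
        ((B k ×ˢ Finset.range (m k)).image (fun p : ℕ × ℕ => m k * p.1 + p.2)).card ≤ f k := by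
      intro B hB k
      calc ((B k ×ˢ Finset.range (m k)).image (fun p : ℕ × ℕ => m k * p.1 + p.2)).card
          ≤ (B k ×ˢ Finset.range (m k)).card := Finset.card_image_le
        _ = g k * m k := by rw [Finset.card_product, hsl B hB k, Finset.card_range]
        _ ≤ f k := by rw [mul_comm]; exact Nat.div_mul_le_self (f k) (g k)
    have hmem : Cardinal.mk (Φ '' 𝓑 : Set (ℕ → Finset ℕ)) ∈
        { c : Cardinal | ∃ 𝓒 : Set (ℕ → Finset ℕ),
          (∀ B ∈ 𝓒, IsSlalom f B) ∧
          (∀ x : ℕ → ℕ, (∀ k, x k < (fun k => f k * (f k / g k)) k) → ∃ B ∈ 𝓒, Covers B x) ∧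
          c = Cardinal.mk 𝓒 } := by
      refine ⟨Φ '' 𝓑, ?_, ?_, rfl⟩
      · rintro B' ⟨B, hB, rfl⟩ k
        exact padTo_card _ _ (hcard B hB k)
      · intro y hy
        simp only at hy
        -- decompose y k = m k * (y k / m k) + (y k % m k)
        set u : ℕ → ℕ := fun k => y k / m k with hu
        have hult : ∀ k, u k < f k := fun k =>
          Nat.div_lt_of_lt_mul (by rw [mul_comm]; exact hy k)
        obtain ⟨B, hB, hBcov⟩ := hcov u hult
        refine ⟨Φ B, ⟨B, hB, rfl⟩, fun k => ?_⟩
        apply padTo_subset _ _ (hcard B hB k)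
        have : y k = m k * u k + y k % m k := (Nat.div_add_mod (y k) (m k)).symm
        rw [this]
        exact Finset.mem_image.2 ⟨(u k, y k % m k),
          Finset.mem_product.2 ⟨hBcov k, Finset.mem_range.2
            (Nat.mod_lt _ (hm1 k))⟩, rfl⟩
    calc slalomCov (fun k => f k * (f k / g k)) f
        ≤ Cardinal.mk (Φ '' 𝓑 : Set (ℕ → Finset ℕ)) := csInf_le' hmem
      _ ≤ Cardinal.mk 𝓑 := Cardinal.mk_image_le
end

section
/- Let f, g : ℕ → ℕ with 1 ≤ g(k) < f(k) for all k. Then for every m ∈ ℕ, 𝔠(f·⌊f/g⌋^m, g) = 𝔠(f,g), where (f·⌊f/g⌋^m)(k) = f(k)·⌊f(k)/g(k)⌋^m and ⌊·⌋ is the integer part. -/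
/-!
If `g * d ≤ f` pointwise, then `c(f * d, g) ≤ c(f, g)`. Cover `x / d` by a slalom `B` of an optimal
family; then `x k` lies in the set of `b * d + j` with `b ∈ B k` and `j < d k`, which has at most
`g k * d k ≤ f k` elements and can be relabelled into `[0, f k)` by a permutation of `ℕ`. Covering
the relabelled sequence by a second slalom `B'` of the family covers `x` by `B'` relabelled back,
so pairs of slaloms suffice, and `c(f, g)² = c(f, g)` since `c(f, g)` is infinite by
diagonalisation. Iterating with `d = ⌊f/g⌋` gives `≤`; monotonicity in `f` gives `≥`.
-/

open Cardinal Finset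

theorem Finset.exists_perm_lt_card (S : Finset ℕ) :
    ∃ σ : Equiv.Perm ℕ, ∀ x ∈ S, σ x < S.card := by
  let rank : (S : Set ℕ) ↪ ℕ :=
    ⟨fun x => S.equivFin x, Fin.val_injective.comp S.equivFin.injective⟩
  obtain ⟨σ, hσ⟩ := extend_function_of_lt rank (by simp) ⟨Equiv.refl ℕ⟩
  exact ⟨σ, fun x hx => (hσ ⟨x, hx⟩).symm ▸ (S.equivFin ⟨x, hx⟩).isLt⟩

/-- `{x | x / d ∈ A}` when `d ≠ 0`; empty when `d = 0`. -/
def Finset.divPreimage (A : Finset ℕ) (d : ℕ) : Finset ℕ :=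
  (A ×ˢ range d).image fun p => p.1 * d + p.2

theorem Finset.mem_divPreimage {A : Finset ℕ} {d x : ℕ} (hd : 0 < d) (hx : x / d ∈ A) :
    x ∈ A.divPreimage d :=
  mem_image.mpr ⟨(x / d, x % d), mem_product.mpr ⟨hx, mem_range.mpr (Nat.mod_lt x hd)⟩,
    by rw [mul_comm]; exact Nat.div_add_mod x d⟩

theorem Finset.card_divPreimage_le (A : Finset ℕ) (d : ℕ) :
    (A.divPreimage d).card ≤ A.card * d :=
  card_image_le.trans (by rw [card_product, card_range])

def IsSlalomCover (f g : ℕ → ℕ) (𝓑 : Set (ℕ → Finset ℕ)) : Prop :=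
  (∀ B ∈ 𝓑, IsSlalom g B) ∧ ∀ x : ℕ → ℕ, (∀ k, x k < f k) → ∃ B ∈ 𝓑, Covers B x

section SlalomCov

variable {f f' g d : ℕ → ℕ} {𝓑 : Set (ℕ → Finset ℕ)}

theorem slalomCov_eq_sInf :
    slalomCov f g = sInf {c | ∃ 𝓑, IsSlalomCover f g 𝓑 ∧ #𝓑 = c} := by
  simp only [slalomCov, IsSlalomCover, and_assoc, eq_comm]

theorem slalomCov_le_mk (h : IsSlalomCover f g 𝓑) : slalomCov f g ≤ #𝓑 :=
  slalomCov_eq_sInf ▸ csInf_le' ⟨𝓑, h, rfl⟩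

theorem isSlalomCover_setOf_isSlalom (hg : ∀ k, 1 ≤ g k) :
    IsSlalomCover f g {B | IsSlalom g B} := by
  refine ⟨fun B hB => hB, fun x _ =>
    ⟨fun k => (range (g k)).map (addLeftEmbedding (x k)), ?_, ?_⟩⟩
  · intro k
    simp
  · intro k
    exact mem_map.mpr ⟨0, mem_range.mpr (hg k), add_zero _⟩

theorem exists_isSlalomCover_mk_eq_slalomCov (hg : ∀ k, 1 ≤ g k) :
    ∃ 𝓑, IsSlalomCover f g 𝓑 ∧ #𝓑 = slalomCov f g := by
  rw [slalomCov_eq_sInf]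
  exact csInf_mem (s := {c | ∃ 𝓑, IsSlalomCover f g 𝓑 ∧ #𝓑 = c})
    ⟨_, _, isSlalomCover_setOf_isSlalom hg, rfl⟩

theorem IsSlalomCover.mono (h : IsSlalomCover f' g 𝓑) (hf : ∀ k, f k ≤ f' k) :
    IsSlalomCover f g 𝓑 :=
  ⟨h.1, fun x hx => h.2 x fun k => (hx k).trans_le (hf k)⟩

theorem slalomCov_mono (hg : ∀ k, 1 ≤ g k) (hf : ∀ k, f k ≤ f' k) :
    slalomCov f g ≤ slalomCov f' g := by
  obtain ⟨𝓑, h𝓑, hc⟩ := exists_isSlalomCover_mk_eq_slalomCov (f := f') hg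
  exact hc ▸ slalomCov_le_mk (h𝓑.mono hf)

theorem IsSlalomCover.not_countable (hgf : ∀ k, g k < f k) (h : IsSlalomCover f g 𝓑) :
    ¬ 𝓑.Countable := by
  intro hc
  obtain ⟨B₀, hB₀, -⟩ := h.2 0 fun k => (Nat.zero_le _).trans_lt (hgf k)
  obtain ⟨e, rfl⟩ := hc.exists_eq_range ⟨B₀, hB₀⟩
  have hdiag : ∀ k, ∃ y ∈ range (f k), y ∉ e k k := fun k =>
    exists_mem_notMem_of_card_lt_card <| by
      rw [card_range, h.1 _ ⟨k, rfl⟩ k]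
      exact hgf k
  choose x hx hxe using hdiag
  obtain ⟨_, ⟨n, rfl⟩, hn⟩ := h.2 x fun k => mem_range.mp (hx k)
  exact hxe n (hn n)

theorem aleph0_le_mk_of_isSlalomCover (hgf : ∀ k, g k < f k) (h : IsSlalomCover f g 𝓑) :
    ℵ₀ ≤ #𝓑 :=
  (lt_of_not_ge fun hle => h.not_countable hgf (le_aleph0_iff_set_countable.mp hle)).le

theorem IsSlalomCover.exists_image2_isSlalomCover_mul (h : IsSlalomCover f g 𝓑) (hd : ∀ k, 0 < d k)
    (hgd : ∀ k, g k * d k ≤ f k) :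
    ∃ combine : (ℕ → Finset ℕ) → (ℕ → Finset ℕ) → (ℕ → Finset ℕ),
      IsSlalomCover (fun k => f k * d k) g (Set.image2 combine 𝓑 𝓑) := by
  choose σ hσ using Finset.exists_perm_lt_card
  refine ⟨fun B B' k => (B' k).map (σ ((B k).divPreimage (d k))).symm.toEmbedding, ?_, ?_⟩
  · rintro _ ⟨B, -, B', hB', rfl⟩ k
    rw [card_map]
    exact h.1 B' hB' k
  · intro x hx
    obtain ⟨B, hB, hxB⟩ :=
      h.2 (fun k => x k / d k) fun k => (Nat.div_lt_iff_lt_mul (hd k)).mpr (hx k)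
    have hx_mem : ∀ k, x k ∈ (B k).divPreimage (d k) := fun k => mem_divPreimage (hd k) (hxB k)
    have hlabel_lt : ∀ k, σ ((B k).divPreimage (d k)) (x k) < f k := fun k =>
      calc _ < ((B k).divPreimage (d k)).card := hσ _ _ (hx_mem k)
        _ ≤ (B k).card * d k := card_divPreimage_le _ _
        _ ≤ f k := by rw [h.1 B hB k]; exact hgd k
    obtain ⟨B', hB', hlabelB'⟩ := h.2 _ hlabel_lt
    exact ⟨_, ⟨B, hB, B', hB', rfl⟩, fun k => mem_map_equiv.mpr (by simpa using hlabelB' k)⟩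

theorem slalomCov_mul_le (hg : ∀ k, 1 ≤ g k) (hgf : ∀ k, g k < f k) (hd : ∀ k, 0 < d k)
    (hgd : ∀ k, g k * d k ≤ f k) :
    slalomCov (fun k => f k * d k) g ≤ slalomCov f g := by
  obtain ⟨𝓑, h𝓑, hc⟩ := exists_isSlalomCover_mk_eq_slalomCov (f := f) hg
  obtain ⟨combine, hcombine⟩ := h𝓑.exists_image2_isSlalomCover_mul hd hgd
  calc slalomCov (fun k => f k * d k) g
      ≤ #(Set.image2 combine 𝓑 𝓑) := slalomCov_le_mk hcombine
    _ ≤ #𝓑 * #𝓑 := mk_image2_le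
    _ = slalomCov f g := by rw [mul_eq_self (aleph0_le_mk_of_isSlalomCover hgf h𝓑), hc]

end SlalomCov

theorem slalomCov_mul_div_pow_eq (f g : ℕ → ℕ) (hg : ∀ k, 1 ≤ g k) (hgf : ∀ k, g k < f k)
    (m : ℕ) :
    slalomCov (fun k => f k * (f k / g k) ^ m) g = slalomCov f g := by
  have hd : ∀ k, 0 < f k / g k := fun k => Nat.div_pos (hgf k).le (hg k)
  have hf_le : ∀ n k, f k ≤ f k * (f k / g k) ^ n := fun n k =>
    Nat.le_mul_of_pos_right _ (pow_pos (hd k) n)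
  induction m with
  | zero => simp
  | succ n ih =>
    refine le_antisymm ?_ (slalomCov_mono hg (hf_le _))
    calc slalomCov (fun k => f k * (f k / g k) ^ (n + 1)) g
        = slalomCov (fun k => f k * (f k / g k) ^ n * (f k / g k)) g := by
          simp only [pow_succ, mul_assoc]
      _ ≤ slalomCov (fun k => f k * (f k / g k) ^ n) g :=
        slalomCov_mul_le hg (fun k => (hgf k).trans_le (hf_le n k)) hd fun k =>
          (Nat.mul_div_le (f k) (g k)).trans (hf_le n k)
      _ = slalomCov f g := ih
end

section
/- Let f, g : ℕ → ℕ with 1 ≤ g(k) < f(k) for all k, and let f', g' : ℕ → ℕ with f'(i) ≥ 1 and g'(i) ≥ 1 for all i. Assume ⟨w_i : i ∈ ℕ⟩ is a partition of ℕ into finite sets, and for each i ∈ ℕ and each l ∈ w_i there is a function H^i_l : {0,…,f'(i)−1} → {0,…,f(l)−1} such that: whenever ⟨u_l : l ∈ w_i⟩ is a family of sets with u_l ⊆ {0,…,f(l)−1} and |u_l| ≤ g(l) for every l ∈ w_i, the set {n < f'(i) : for all l ∈ w_i, H^i_l(n) ∈ u_l} has cardinality at most g'(i). Then 𝔠(f',g')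 ≤ 𝔠(f,g). -/
/-- Pad a finset to exact cardinality `m`; if its card is at most `m` it stays inside. -/
lemma pad_exists (s : Finset ℕ) (m : ℕ) :
    ∃ t : Finset ℕ, (s.card ≤ m → s ⊆ t) ∧ t.card = m := by
  by_cases h : s.card ≤ m
  · obtain ⟨t, hst, ht⟩ := Infinite.exists_superset_card_eq s m h
    exact ⟨t, fun _ => hst, ht⟩
  · exact ⟨Finset.range m, fun h' => absurd h' h, Finset.card_range m⟩

noncomputable def padSet (s : Finset ℕ) (m : ℕ) : Finset ℕ := (pad_exists s m).choose

lemma padSet_subset {s : Finset ℕ} {m : ℕ} (h : s.card ≤ m) : s ⊆ padSet s m :=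
  (pad_exists s m).choose_spec.1 h

lemma padSet_card (s : Finset ℕ) (m : ℕ) : (padSet s m).card = m :=
  (pad_exists s m).choose_spec.2

theorem slalomCov_le_of_projections (f g f' g' : ℕ → ℕ)
    (hg : ∀ k, 1 ≤ g k) (hgf : ∀ k, g k < f k)
    (hf' : ∀ i, 1 ≤ f' i) (hg' : ∀ i, 1 ≤ g' i)
    (w : ℕ → Finset ℕ) (hw : ∀ l : ℕ, ∃! i : ℕ, l ∈ w i)
    (H : ℕ → ℕ → ℕ → ℕ)
    (hdom : ∀ i : ℕ, ∀ l ∈ w i, ∀ n < f' i, H i l n < f l)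
    (hc : ∀ i : ℕ, ∀ u : ℕ → Finset ℕ,
      (∀ l ∈ w i, u l ⊆ Finset.range (f l) ∧ (u l).card ≤ g l) →
      ((Finset.range (f' i)).filter (fun n => ∀ l ∈ w i, H i l n ∈ u l)).card ≤ g' i) :
    slalomCov f' g' ≤ slalomCov f g := by
  classical
  -- The defining set for (f, g) is nonempty: take all g-slaloms.
  have hS : ({ c : Cardinal | ∃ 𝓑 : Set (ℕ → Finset ℕ),
      (∀ B ∈ 𝓑, IsSlalom g B) ∧
      (∀ x : ℕ → ℕ, (∀ k, x k < f k) → ∃ B ∈ 𝓑, Covers B x) ∧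
      c = Cardinal.mk 𝓑 }).Nonempty := by
    refine ⟨_, {B | IsSlalom g B}, fun B hB => hB, ?_, rfl⟩
    intro x hx
    refine ⟨fun k => padSet {x k} (g k), fun k => padSet_card _ _, fun k => ?_⟩
    exact padSet_subset (by simpa using hg k) (Finset.mem_singleton_self (x k))
  rw [slalomCov, slalomCov]
  apply le_csInf hS
  rintro c ⟨𝓑, h1, h2, rfl⟩
  -- the filter set
  set F : (ℕ → Finset ℕ) → ℕ → Finset ℕ := fun B i =>
    (Finset.range (f' i)).filter (fun n => ∀ l ∈ w i, H i l n ∈ B l) with hF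
  have hFcard : ∀ B ∈ 𝓑, ∀ i, (F B i).card ≤ g' i := by
    intro B hB i
    have key := hc i (fun l => B l ∩ Finset.range (f l)) (by
      intro l _
      constructor
      · exact Finset.inter_subset_right
      · calc (B l ∩ Finset.range (f l)).card ≤ (B l).card := Finset.card_le_card Finset.inter_subset_left
          _ = g l := h1 B hB l)
    refine le_trans (Finset.card_le_card ?_) key
    intro n hn
    simp only [hF, Finset.mem_filter, Finset.mem_range] at hn ⊢
    refine ⟨hn.1, fun l hl => Finset.mem_inter.2 ⟨hn.2 l hl, ?_⟩⟩
    exact Finset.mem_range.2 (hdom i l hl n hn.1)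
  set T : (ℕ → Finset ℕ) → (ℕ → Finset ℕ) := fun B i => padSet (F B i) (g' i) with hT
  -- the new family
  refine le_trans (csInf_le' ⟨T '' 𝓑, ?_, ?_, rfl⟩) (Cardinal.mk_image_le)
  · rintro B' ⟨B, hB, rfl⟩ i
    exact padSet_card _ _
  · intro x' hx'
    -- choose index function
    have idx : ∀ l, ∃ i, l ∈ w i := fun l => (hw l).exists
    set ix : ℕ → ℕ := fun l => (idx l).choose with hix
    have hixw : ∀ l, l ∈ w (ix l) := fun l => (idx l).choose_spec
    set x : ℕ → ℕ := fun l => H (ix l) l (x' (ix l)) with hxdef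
    have hxb : ∀ l, x l < f l := fun l =>
      hdom (ix l) l (hixw l) (x' (ix l)) (hx' (ix l))
    obtain ⟨B, hB, hBx⟩ := h2 x hxb
    refine ⟨T B, ⟨B, hB, rfl⟩, fun i => ?_⟩
    apply padSet_subset (hFcard B hB i)
    simp only [hF, Finset.mem_filter, Finset.mem_range]
    refine ⟨hx' i, fun l hl => ?_⟩
    have : ix l = i := ((hw l).unique (hixw l) hl)
    have := hBx l
    rw [hxdef] at this
    simpa [‹ix l = i›] using this
end

section
/- Let f, g : ℕ → ℕ, suppose g is constant with value n ≥ 1, and suppose f(k) ≥ 2^k for all k. Then 𝔠(f,g) = 2^{ℵ₀}, the cardinality of the continuum. -/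
/-- Encode the first `k` bits of `r` as a natural number `< 2^k`. -/
def xfun (r : ℕ → Bool) (k : ℕ) : ℕ := ∑ i ∈ Finset.range k, if r i then 2 ^ i else 0

lemma xfun_lt (r : ℕ → Bool) (k : ℕ) : xfun r k < 2 ^ k := by
  induction k with
  | zero => simp [xfun]
  | succ k ih =>
    have : xfun r (k + 1) = xfun r k + (if r k then 2 ^ k else 0) := by
      simp [xfun, Finset.sum_range_succ]
    have h2 : (if r k then 2 ^ k else 0) ≤ 2 ^ k := by split <;> omega
    rw [this, pow_succ]
    omega

lemma xfun_inj (r r' : ℕ → Bool) (k : ℕ) (h : xfun r k = xfun r' k) :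
    ∀ i < k, r i = r' i := by
  induction k with
  | zero => omega
  | succ k ih =>
    have e1 : xfun r (k + 1) = xfun r k + (if r k then 2 ^ k else 0) := by
      simp [xfun, Finset.sum_range_succ]
    have e2 : xfun r' (k + 1) = xfun r' k + (if r' k then 2 ^ k else 0) := by
      simp [xfun, Finset.sum_range_succ]
    have b1 := xfun_lt r k
    have b2 := xfun_lt r' k
    rw [e1, e2] at h
    have hk : r k = r' k := by
      cases hr : r k <;> cases hr' : r' k <;> simp [hr, hr'] at h ⊢ <;> omega
    have heq : xfun r k = xfun r' k := by rw [hk] at h; omega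
    intro i hi
    rcases Nat.lt_or_ge i k with hik | hik
    · exact ih heq i hik
    · have : i = k := by omega
      rw [this]; exact hk

open Classical in
/-- The first index where two distinct functions differ. -/
noncomputable def diffIdx (r r' : ℕ → Bool) : ℕ :=
  if h : r = r' then 0 else Nat.find (Function.ne_iff.mp h)

lemma diffIdx_spec {r r' : ℕ → Bool} (h : r ≠ r') :
    r (diffIdx r r') ≠ r' (diffIdx r r') := by
  rw [diffIdx]
  rw [dif_neg h]
  exact Nat.find_spec (Function.ne_iff.mp h)

/-- A slalom of constant width `n` covers at most `n` of the functions `xfun r`. -/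
lemma finset_card_le (n : ℕ) (B : ℕ → Finset ℕ) (hB : ∀ k, (B k).card = n)
    (t : Finset (ℕ → Bool)) (ht : ∀ r ∈ t, Covers B (xfun r)) : t.card ≤ n := by
  set K := (t ×ˢ t).sup (fun p => diffIdx p.1 p.2) + 1 with hK
  have hinj : Set.InjOn (fun r => xfun r K) t := by
    intro r hr r' hr' hxy
    by_contra hne
    have hmem : (r, r') ∈ t ×ˢ t := Finset.mem_product.mpr ⟨hr, hr'⟩
    have hle : diffIdx r r' ≤ (t ×ˢ t).sup (fun p => diffIdx p.1 p.2) :=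
      Finset.le_sup (f := fun p => diffIdx p.1 p.2) hmem
    have hlt : diffIdx r r' < K := by omega
    exact diffIdx_spec hne (xfun_inj r r' K hxy _ hlt)
  have := Finset.card_le_card_of_injOn (fun r => xfun r K)
    (fun r hr => ht r hr K) hinj
  rwa [hB K] at this

theorem slalomCov_const_g (f g : ℕ → ℕ) (n : ℕ) (hn : 1 ≤ n)
    (hg : ∀ k, g k = n) (hf : ∀ k, 2 ^ k ≤ f k) :
    slalomCov f g = Cardinal.continuum := by
  classical
  set S := { c : Cardinal | ∃ 𝓑 : Set (ℕ → Finset ℕ),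
    (∀ B ∈ 𝓑, IsSlalom g B) ∧
    (∀ x : ℕ → ℕ, (∀ k, x k < f k) → ∃ B ∈ 𝓑, Covers B x) ∧
    c = Cardinal.mk 𝓑 } with hS
  -- witness family: all intervals
  set 𝓑₀ : Set (ℕ → Finset ℕ) :=
    Set.range (fun x : ℕ → ℕ => fun k => Finset.Ico (x k) (x k + n)) with h𝓑₀
  have hmem : Cardinal.mk 𝓑₀ ∈ S := by
    refine ⟨𝓑₀, ?_, ?_, rfl⟩
    · rintro B ⟨x, rfl⟩ k
      simp [Nat.card_Ico, hg k]
    · intro x hx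
      exact ⟨_, ⟨x, rfl⟩, fun k => Finset.mem_Ico.mpr ⟨le_rfl, by omega⟩⟩
  have hupper : slalomCov f g ≤ Cardinal.continuum := by
    have h1 : slalomCov f g ≤ Cardinal.mk 𝓑₀ := csInf_le' hmem
    have h2 : Cardinal.mk 𝓑₀ ≤ Cardinal.mk (ℕ → ℕ) := Cardinal.mk_range_le
    have h3 : Cardinal.mk (ℕ → ℕ) = Cardinal.continuum := by
      rw [Cardinal.mk_arrow]
      simp [Cardinal.aleph0_power_aleph0]
    exact h1.trans (h2.trans h3.le)
  refine le_antisymm hupper ?_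
  refine le_csInf ⟨_, hmem⟩ ?_
  rintro c ⟨𝓑, hB, hcov, rfl⟩
  by_contra hlt
  push_neg at hlt
  -- choose a covering slalom for each real
  have hex : ∀ r : ℕ → Bool, ∃ B : 𝓑, Covers (B : ℕ → Finset ℕ) (xfun r) := by
    intro r
    obtain ⟨B, hBm, hc⟩ := hcov (xfun r) (fun k => lt_of_lt_of_le (xfun_lt r k) (hf k))
    exact ⟨⟨B, hBm⟩, hc⟩
  choose φ hφ using hex
  -- each fiber of φ has at most n elements
  have fiber : ∀ b : 𝓑, Cardinal.mk (φ ⁻¹' {b}) ≤ (n : Cardinal) := by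
    intro b
    have hcard : ∀ t : Finset (ℕ → Bool), ↑t ⊆ φ ⁻¹' {b} → t.card ≤ n := by
      intro t htsub
      refine finset_card_le n b (fun k => (hB b b.2 k).trans (hg k)) t ?_
      intro r hr
      have : φ r = b := htsub hr
      rw [← this]
      exact hφ r
    have hfin : (φ ⁻¹' {b}).Finite := by
      by_contra hinf
      have hinf' : (φ ⁻¹' {b}).Infinite := hinf
      obtain ⟨t, htsub, htc⟩ := hinf'.exists_subset_card_eq (n + 1)
      have := hcard t htsub
      omega
    have h1 : Cardinal.mk (φ ⁻¹' {b}) = (hfin.toFinset.card : Cardinal) := by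
      rw [← Cardinal.mk_coe_finset (s := hfin.toFinset)]
      exact Cardinal.mk_congr (Equiv.setCongr hfin.coe_toFinset.symm)
    rw [h1]
    exact_mod_cast hcard hfin.toFinset (by rw [hfin.coe_toFinset])
  have hmain : Cardinal.mk (ℕ → Bool) ≤ Cardinal.mk 𝓑 * (n : Cardinal) :=
    Cardinal.mk_le_mk_mul_of_mk_preimage_le φ fiber
  have hcontMk : Cardinal.mk (ℕ → Bool) = Cardinal.continuum := by
    rw [Cardinal.mk_arrow]
    simp [Cardinal.two_power_aleph0]
  have hsmall : Cardinal.mk 𝓑 * (n : Cardinal) < Cardinal.continuum :=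
    Cardinal.mul_lt_of_lt Cardinal.aleph0_le_continuum hlt
      ((Cardinal.nat_lt_aleph0 n).trans_le Cardinal.aleph0_le_continuum)
  rw [hcontMk] at hmain
  exact absurd (hmain.trans_lt hsmall) (lt_irrefl _)
end

section
/- Let f, g : ℕ → ℕ be constant functions, say f(k) = m and g(k) = n for all k, with m > n ≥ 1. Then 𝔠(f,g) = 2^{ℵ₀}, the cardinality of the continuum. -/
/-- A continuum-sized family of functions `ℕ → [0,s)` such that any `s` distinct
members take all `s` values at some common coordinate. -/
lemma exists_rainbow (s : ℕ) (hs : 1 ≤ s) :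
    ∃ x : (ℕ → Bool) → ℕ → ℕ, (∀ w k, x w k < s) ∧
      ∀ W : Fin s → (ℕ → Bool), Function.Injective W →
        ∃ k, ∀ i, x (W i) k = i.val := by
  classical
  obtain ⟨σ, hσ⟩ := exists_surjective_nat (Fin s → List Bool)
  refine ⟨fun w k => if h : ∃ i : Fin s, σ k i = (List.range (σ k i).length).map w
      then (h.choose).val else 0, fun w k => ?_, fun W hW => ?_⟩ <;> dsimp only
  · split
    next h => exact h.choose.isLt
    next => omega
  · -- choose a common prefix length past all splitting points
    set P : Fin s × Fin s → ℕ := fun q =>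
      if h : W q.1 ≠ W q.2 then (Function.ne_iff.mp h).choose else 0 with hP
    set j : ℕ := (Finset.univ.sup P) + 1 with hj
    set a : Fin s → List Bool := fun i => (List.range j).map (W i) with haa
    have ha : Function.Injective a := by
      intro i i' he
      by_contra hne
      have hWn : W i ≠ W i' := fun e => hne (hW e)
      have hp : W i ((Function.ne_iff.mp hWn).choose)
          ≠ W i' ((Function.ne_iff.mp hWn).choose) := (Function.ne_iff.mp hWn).choose_spec
      have hple : P (i, i') ≤ Finset.univ.sup P := Finset.le_sup (Finset.mem_univ _)
      have hPv : P (i, i') = (Function.ne_iff.mp hWn).choose := by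
        simp only [hP, dif_pos hWn]
      have hmem : (Function.ne_iff.mp hWn).choose ∈ List.range j :=
        List.mem_range.mpr (by omega)
      exact hp (List.map_inj_left.mp he _ hmem)
    obtain ⟨k, hk⟩ := hσ a
    refine ⟨k, fun i => ?_⟩
    have hex : ∃ i' : Fin s, σ k i' = (List.range (σ k i').length).map (W i) := by
      refine ⟨i, ?_⟩
      rw [hk]
      simp [haa]
    rw [dif_pos hex]
    have hspec := hex.choose_spec
    have h1 : σ k hex.choose = a hex.choose := congrFun hk hex.choose
    have hlen : (σ k hex.choose).length = j := by rw [h1]; simp [haa]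
    rw [hlen, h1] at hspec
    have : a hex.choose = a i := hspec
    exact congrArg Fin.val (ha this)

theorem slalomCov_const (f g : ℕ → ℕ) (m n : ℕ) (hn : 1 ≤ n) (hnm : n < m)
    (hf : ∀ k, f k = m) (hg : ∀ k, g k = n) :
    slalomCov f g = Cardinal.continuum := by
  classical
  have hsl : ∀ x : ℕ → ℕ,
      IsSlalom g (fun k => Finset.image (fun i => x k + i) (Finset.range n)) := by
    intro x k
    simp only
    rw [Finset.card_image_of_injective _ (add_right_injective (x k)), Finset.card_range, hg]
  have hcov : ∀ x : ℕ → ℕ,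
      Covers (fun k => Finset.image (fun i => x k + i) (Finset.range n)) x := by
    intro x k
    exact Finset.mem_image.mpr ⟨0, Finset.mem_range.mpr hn, add_zero _⟩
  have hmem : Cardinal.mk ↑{B : ℕ → Finset ℕ | IsSlalom g B} ∈
      { c : Cardinal | ∃ 𝓑 : Set (ℕ → Finset ℕ),
        (∀ B ∈ 𝓑, IsSlalom g B) ∧
        (∀ x : ℕ → ℕ, (∀ k, x k < f k) → ∃ B ∈ 𝓑, Covers B x) ∧
        c = Cardinal.mk 𝓑 } :=
    ⟨{B : ℕ → Finset ℕ | IsSlalom g B}, fun _ hB => hB,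
      fun x _ => ⟨_, hsl x, hcov x⟩, rfl⟩
  unfold slalomCov
  apply le_antisymm
  · refine le_trans (csInf_le' hmem) ?_
    refine le_trans (Cardinal.mk_set_le _) ?_
    rw [Cardinal.mk_arrow]
    have h1 : Cardinal.mk (Finset ℕ) = Cardinal.aleph0 := Cardinal.mk_eq_aleph0 _
    rw [h1, Cardinal.mk_nat, Cardinal.lift_aleph0,
      Cardinal.power_self_eq le_rfl, Cardinal.two_power_aleph0]
  · refine le_csInf ⟨_, hmem⟩ ?_
    rintro c ⟨𝓑, hB, hcov', rfl⟩
    obtain ⟨x, hxlt, hrb⟩ := exists_rainbow (n + 1) (by omega)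
    have hxf : ∀ w k, x w k < f k := fun w k => by
      rw [hf]; exact lt_of_lt_of_le (hxlt w k) (by omega)
    choose Bw hBw hCw using fun w => hcov' (x w) (hxf w)
    set Φ : (ℕ → Bool) → ↑𝓑 := fun w => ⟨Bw w, hBw w⟩ with hΦ
    have hfiber : ∀ b : ↑𝓑, Cardinal.mk {w // Φ w = b} ≤ (n : Cardinal) := by
      intro b
      by_contra hlt
      push_neg at hlt
      have h1 : ((n + 1 : ℕ) : Cardinal) ≤ Cardinal.mk {w // Φ w = b} := by
        have := Order.succ_le_of_lt hlt
        rwa [← Cardinal.nat_succ] at this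
      rw [← Cardinal.mk_fin (n + 1), Cardinal.le_def] at h1
      obtain ⟨e⟩ := h1
      have hWinj : Function.Injective (fun i : Fin (n + 1) => (e i).1) :=
        fun i i' h => e.injective (Subtype.ext h)
      obtain ⟨k, hk⟩ := hrb _ hWinj
      have hsub : Finset.range (n + 1) ⊆ (b : ℕ → Finset ℕ) k := by
        intro v hv
        set i : Fin (n + 1) := ⟨v, Finset.mem_range.mp hv⟩ with hi
        have hv' : x ((e i).1) k ∈ Bw ((e i).1) k := hCw _ k
        have hbb : Bw ((e i).1) = (b : ℕ → Finset ℕ) := congrArg Subtype.val (e i).2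
        rw [hbb, hk i] at hv'
        exact hv'
      have hcard := Finset.card_le_card hsub
      rw [Finset.card_range] at hcard
      have hcb : ((b : ℕ → Finset ℕ) k).card = g k := hB _ b.2 k
      rw [hg] at hcb
      omega
    have hcont : Cardinal.mk (ℕ → Bool) = Cardinal.continuum := by
      rw [Cardinal.mk_arrow, Cardinal.mk_bool, Cardinal.mk_nat, Cardinal.lift_aleph0,
        Cardinal.lift_two, Cardinal.two_power_aleph0]
    have hsum : Cardinal.mk (ℕ → Bool) ≤ Cardinal.mk ↑𝓑 * (n : Cardinal) := by
      calc Cardinal.mk (ℕ → Bool)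
          = Cardinal.mk (Σ b : ↑𝓑, {w // Φ w = b}) :=
            (Cardinal.mk_congr (Equiv.sigmaFiberEquiv Φ)).symm
        _ = Cardinal.sum (fun b : ↑𝓑 => Cardinal.mk {w // Φ w = b}) := Cardinal.mk_sigma _
        _ ≤ Cardinal.sum (fun _ : ↑𝓑 => (n : Cardinal)) := Cardinal.sum_le_sum _ _ hfiber
        _ = Cardinal.mk ↑𝓑 * (n : Cardinal) := Cardinal.sum_const' _ _
    rcases le_or_gt Cardinal.aleph0 (Cardinal.mk ↑𝓑) with h | h
    · have hle : Cardinal.mk ↑𝓑 * (n : Cardinal) ≤ Cardinal.mk ↑𝓑 * Cardinal.aleph0 :=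
        mul_le_mul_right (le_of_lt (Cardinal.nat_lt_aleph0 n)) _
      rw [Cardinal.mul_aleph0_eq h] at hle
      rw [← hcont]
      exact hsum.trans hle
    · exfalso
      have hsmall : Cardinal.mk ↑𝓑 * (n : Cardinal) < Cardinal.aleph0 :=
        Cardinal.mul_lt_aleph0 h (Cardinal.nat_lt_aleph0 n)
      have : Cardinal.continuum < Cardinal.aleph0 := lt_of_le_of_lt (hcont ▸ hsum) hsmall
      exact absurd this (not_lt_of_gt Cardinal.aleph0_lt_continuum)
end

section
/- Let f, g : ℕ → ℕ with 1 ≤ g(k) < f(k) for all k. Then 𝔠(2f−g, f) ≤ 𝔠(f,g), where (2f−g)(k) = 2f(k) − g(k). -/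
theorem slalomCov_two_f_sub_g_le (f g : ℕ → ℕ) (hg : ∀ k, 1 ≤ g k) (hgf : ∀ k, g k < f k) :
    slalomCov (fun k => 2 * f k - g k) f ≤ slalomCov f g := by
  -- The RHS set is nonempty: all g-slaloms form a covering family.
  have hne : ({ c : Cardinal | ∃ 𝓑 : Set (ℕ → Finset ℕ),
      (∀ B ∈ 𝓑, IsSlalom g B) ∧
      (∀ x : ℕ → ℕ, (∀ k, x k < f k) → ∃ B ∈ 𝓑, Covers B x) ∧
      c = Cardinal.mk 𝓑 }).Nonempty := by
    refine ⟨Cardinal.mk {B | IsSlalom g B}, {B | IsSlalom g B}, fun B hB => hB, ?_, rfl⟩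
    intro x _
    refine ⟨fun k => (Finset.range (g k)).image (· + x k), ?_, ?_⟩
    · intro k
      rw [Finset.card_image_of_injective _ (add_left_injective (x k)), Finset.card_range]
    · intro k
      simp only [Finset.mem_image, Finset.mem_range]
      exact ⟨0, hg k, by omega⟩
  have hmem := csInf_mem hne
  obtain ⟨𝓑, h1, h2, h3⟩ := hmem
  -- transform each slalom
  set T : (ℕ → Finset ℕ) → (ℕ → Finset ℕ) := fun B k =>
    (B k).image (· + (f k - g k)) ∪ Finset.range (f k - g k) with hT
  have key : slalomCov (fun k => 2 * f k - g k) f ≤ Cardinal.mk (T '' 𝓑) := by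
    apply csInf_le'
    refine ⟨T '' 𝓑, ?_, ?_, rfl⟩
    · rintro B' ⟨B, hB, rfl⟩
      intro k
      have hcard : ((B k).image (· + (f k - g k))).card = g k := by
        rw [Finset.card_image_of_injective _ (add_left_injective _), h1 B hB k]
      have hdisj : Disjoint ((B k).image (· + (f k - g k))) (Finset.range (f k - g k)) := by
        simp only [Finset.disjoint_left, Finset.mem_image, Finset.mem_range]
        rintro a ⟨b, _, rfl⟩
        omega
      rw [hT]
      simp only
      rw [Finset.card_union_of_disjoint hdisj, hcard, Finset.card_range]
      have := hgf k
      omega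
    · intro x hx
      set y : ℕ → ℕ := fun k => x k - (f k - g k) with hy
      have hyf : ∀ k, y k < f k := by
        intro k
        have hxk : x k < 2 * f k - g k := hx k
        have := hgf k
        simp only [hy]
        omega
      obtain ⟨B, hB, hcov⟩ := h2 y hyf
      refine ⟨T B, ⟨B, hB, rfl⟩, ?_⟩
      intro k
      rw [hT]
      simp only [Finset.mem_union, Finset.mem_image, Finset.mem_range]
      by_cases h : x k < f k - g k
      · exact Or.inr h
      · refine Or.inl ⟨y k, hcov k, ?_⟩
        simp only [hy]
        omega
  calc slalomCov (fun k => 2 * f k - g k) f ≤ Cardinal.mk (T '' 𝓑) := key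
    _ ≤ Cardinal.mk 𝓑 := Cardinal.mk_image_le
    _ = slalomCov f g := h3.symm
end
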